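/- arXiv:2401.12653 — 5 statements merged into one kernel-verified Lean document; each statement's English description precedes it below -/
import Mathlib

section
/- Let I_A and I_B be two MatP instances on the same bipartite graph G = (W ∪ F, E) that differ only in the preference order of a single agent x, let e = {x,y} ∈ E, and let I_H be a hybrid instance of (I_A, I_B) with respect to e. If M is a matching with e ∈ M and M is popular for I_H, then M is popular for both I_A and I_B. -/
open Classical

/-- An instance of matching under preferences (MatP): a bipartite graph on
workers `W` and firms `F` together with, for each agent, a strict linear order
on its neighbors (`pref x y z` means `x` strictly prefers `y` to `z`). -/
structure MatP (α : Type*) where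
  W : Finset α
  F : Finset α
  disjWF : Disjoint W F
  adj : α → α → Prop
  adj_symm : ∀ x y, adj x y → adj y x
  adj_loopless : ∀ x, ¬ adj x x
  adj_bipartite : ∀ x y, adj x y → (x ∈ W ∧ y ∈ F) ∨ (x ∈ F ∧ y ∈ W)
  pref : α → α → α → Prop
  pref_adj : ∀ x y z, pref x y z → adj x y ∧ adj x z
  pref_trans : ∀ x y z w, pref x y z → pref x z w → pref x y w
  pref_irrefl : ∀ x y, ¬ pref x y y
  pref_total : ∀ x y z, adj x y → adj x z → y ≠ z → pref x y z ∨ pref x z y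

/-- `M` is a matching of instance `I`, encoded as a symmetric partial partner
function: `M x = some y` means the edge `{x,y}` belongs to the matching. -/
def IsMatching {α : Type*} (I : MatP α) (M : α → Option α) : Prop :=
  (∀ x y, M x = some y → I.adj x y) ∧ (∀ x y, M x = some y → M y = some x)

/-- Agent `x` prefers (partner) option `o` to option `o'`:
being matched beats being unmatched, and among partners `x` uses `I.pref`. -/
def Better {α : Type*} (I : MatP α) (x : α) : Option α → Option α → Prop
  | some _, none => True
  | some y, some z => I.pref x y z
  | none, _ => False

/-- The vote of agent `x` between partner options `o` and `o'`. -/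
noncomputable def voteO {α : Type*} (I : MatP α) (x : α) (o o' : Option α) : ℤ :=
  if Better I x o o' then 1 else if Better I x o' o then -1 else 0

/-- Popularity margin `Δ^I(M,M')`: the sum of all agents' votes. -/
noncomputable def margin {α : Type*} [DecidableEq α]
    (I : MatP α) (M M' : α → Option α) : ℤ :=
  ∑ x ∈ I.W ∪ I.F, voteO I x (M x) (M' x)

/-- `M` is popular for `I`: it does not lose against any matching. -/
def Popular {α : Type*} [DecidableEq α] (I : MatP α) (M : α → Option α) : Prop :=
  ∀ M', IsMatching I M' → 0 ≤ margin I M M'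

/-- `IA` and `IB` are MatP instances on the same bipartite graph that differ
only in the preference order of the single agent `x`. -/
def SameExcept {α : Type*} (IA IB : MatP α) (x : α) : Prop :=
  IA.W = IB.W ∧ IA.F = IB.F ∧ IA.adj = IB.adj ∧
  ∀ z, z ≠ x → ∀ u v, (IA.pref z u v ↔ IB.pref z u v)

/-- `IH` is a hybrid instance of `(IA, IB)` with respect to the edge `{x,y}`:
same graph, all agents other than `x` keep their `IA` preferences, and in `x`'s
preference order exactly the agents preferred to `y` in `IA` or in `IB`
are placed above `y`. -/
def IsHybrid {α : Type*} (IA IB IH : MatP α) (x y : α) : Prop :=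
  IH.W = IA.W ∧ IH.F = IA.F ∧ IH.adj = IA.adj ∧
  (∀ z, z ≠ x → ∀ u v, (IH.pref z u v ↔ IA.pref z u v)) ∧
  (∀ z, (IA.pref x z y ∨ IB.pref x z y) → IH.pref x z y) ∧
  (∀ z, IA.adj x z → z ≠ y → ¬(IA.pref x z y ∨ IB.pref x z y) → IH.pref x y z)

lemma better_congr {α : Type*} (I J : MatP α) (a : α)
    (h : ∀ u v, J.pref a u v ↔ I.pref a u v) :
    ∀ o o', (Better J a o o' ↔ Better I a o o')
  | some _, none => Iff.rfl
  | some u, some v => h u v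
  | none, _ => Iff.rfl

lemma voteO_congr {α : Type*} (I J : MatP α) (a : α)
    (h : ∀ u v, J.pref a u v ↔ I.pref a u v) (o o' : Option α) :
    voteO J a o o' = voteO I a o o' := by
  unfold voteO
  rw [if_congr (better_congr I J a h o o') rfl
    (if_congr (better_congr I J a h o' o) rfl rfl)]

lemma vote_x_le {α : Type*} (I J : MatP α) (x y : α)
    (hadjxy : I.adj x y) (hadjJ : J.adj = I.adj)
    (hup : ∀ z, I.pref x z y → J.pref x z y)
    (o' : Option α) (ho' : ∀ z, o' = some z → I.adj x z) :
    voteO J x (some y) o' ≤ voteO I x (some y) o' := by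
  cases o' with
  | none => simp [voteO, Better]
  | some z =>
    have hadxz : I.adj x z := ho' z rfl
    by_cases hzy : z = y
    · subst hzy
      simp [voteO, Better, I.pref_irrefl, J.pref_irrefl]
    · by_cases hJ : J.pref x y z
      · have hIA : ¬ I.pref x z y := fun h =>
          J.pref_irrefl x y (J.pref_trans x y z y hJ (hup z h))
        have hI : I.pref x y z :=
          (I.pref_total x y z hadjxy hadxz (Ne.symm hzy)).resolve_right hIA
        simp [voteO, Better, hJ, hI]
      · have hJ' : J.pref x z y :=
          (J.pref_total x y z (hadjJ ▸ hadjxy) (hadjJ ▸ hadxz)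
            (Ne.symm hzy)).resolve_left hJ
        have h1 : voteO J x (some y) (some z) = -1 := by
          simp [voteO, Better, hJ, hJ']
        rw [h1]
        unfold voteO
        split
        · norm_num
        · split <;> norm_num

lemma pop_of_pop {α : Type*} [DecidableEq α] (I J : MatP α) (x y : α)
    (hW : J.W = I.W) (hF : J.F = I.F) (hadj : J.adj = I.adj)
    (hpref : ∀ z, z ≠ x → ∀ u v, (J.pref z u v ↔ I.pref z u v))
    (hadjxy : I.adj x y)
    (hup : ∀ z, I.pref x z y → J.pref x z y)
    (M : α → Option α) (hMx : M x = some y) (hpop : Popular J M) :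
    Popular I M := by
  intro M' hM'
  have hM'J : IsMatching J M' := ⟨fun u v h => hadj ▸ hM'.1 u v h, hM'.2⟩
  have h0 : 0 ≤ margin J M M' := hpop M' hM'J
  refine le_trans h0 ?_
  unfold margin
  rw [hW, hF]
  apply Finset.sum_le_sum
  intro a _
  by_cases hax : a = x
  · subst hax
    rw [hMx]
    exact vote_x_le I J a y hadjxy hadj hup (M' a) (fun z h => hM'.1 a z h)
  · exact le_of_eq (voteO_congr I J a (hpref a hax) (M a) (M' a))

/-- Lemma 1(1): if a matching containing the edge `{x,y}` is popular for the
hybrid instance, then it is (robust) popular for both `IA` and `IB`. -/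
theorem hybrid_popular_of_popular {α : Type*} [DecidableEq α]
    (IA IB IH : MatP α) (x y : α)
    (hsame : SameExcept IA IB x)
    (he : IA.adj x y)
    (hH : IsHybrid IA IB IH x y)
    (M : α → Option α) (hM : IsMatching IA M) (hMx : M x = some y)
    (hpop : Popular IH M) :
    Popular IA M ∧ Popular IB M := by
  obtain ⟨hW, hF, hadj, hpref, hupH, _⟩ := hH
  obtain ⟨hWB, hFB, hadjB, hprefB⟩ := hsame
  constructor
  · exact pop_of_pop IA IH x y hW hF hadj hpref he
      (fun z h => hupH z (Or.inl h)) M hMx hpop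
  · refine pop_of_pop IB IH x y (hW.trans hWB) (hF.trans hFB)
      (hadj.trans hadjB)
      (fun z hz u v => (hpref z hz u v).trans (hprefB z hz u v))
      (hadjB ▸ he) (fun z h => hupH z (Or.inr h)) M hMx hpop
end

section
/- Let I_A and I_B be two MatP instances on the same bipartite graph G = (W ∪ F, E) that differ only in the preference order of a single agent x, let e = {x,y} ∈ E, and let I_H be a hybrid instance of (I_A, I_B) with respect to e. Then there exists a matching containing e that is popular for both I_A and I_B if and only if there exists a matching containing e that is popular for I_H. -/
open Classical

set_option linter.unusedSectionVars false

section Aux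
variable {α : Type*} [DecidableEq α]

lemma better_iff_of_pref_iff (I J : MatP α) (z : α)
    (h : ∀ u v, I.pref z u v ↔ J.pref z u v) (o o' : Option α) :
    Better I z o o' ↔ Better J z o o' := by
  cases o <;> cases o' <;> simp [Better, h]

lemma voteO_eq_of_pref_iff (I J : MatP α) (z : α)
    (h : ∀ u v, I.pref z u v ↔ J.pref z u v) (o o' : Option α) :
    voteO I z o o' = voteO J z o o' := by
  unfold voteO
  rw [if_congr (better_iff_of_pref_iff I J z h o o') rfl
    (if_congr (better_iff_of_pref_iff I J z h o' o) rfl rfl)]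

lemma not_pref_rev (I : MatP α) {a u v : α} (h : I.pref a u v) : ¬ I.pref a v u :=
  fun h' => I.pref_irrefl a u (I.pref_trans a u v u h h')

lemma voteO_of_pref (I : MatP α) {a u v : α} (h : I.pref a u v) :
    voteO I a (some u) (some v) = 1 := by
  simp [voteO, Better, h]

lemma voteO_of_pref' (I : MatP α) {a u v : α} (h : I.pref a v u) :
    voteO I a (some u) (some v) = -1 := by
  simp [voteO, Better, h, not_pref_rev I h]

lemma isMatching_congr (I J : MatP α) (h : I.adj = J.adj) (M : α → Option α) :
    IsMatching I M ↔ IsMatching J M := by unfold IsMatching; rw [h]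

lemma vote_x_min (IA IB IH : MatP α) (x y : α)
    (hsame : SameExcept IA IB x) (he : IA.adj x y) (hH : IsHybrid IA IB IH x y)
    (o : Option α) (ho : ∀ z, o = some z → IA.adj x z) :
    voteO IH x (some y) o = min (voteO IA x (some y) o) (voteO IB x (some y) o) := by
  obtain ⟨hW, hF, hadjAB, hprefAB⟩ := hsame
  obtain ⟨hWH, hFH, hadjH, hprefH, hup, hdown⟩ := hH
  cases o with
  | none => simp [voteO, Better]
  | some z =>
    by_cases hzy : z = y
    · subst hzy
      simp [voteO, Better, IA.pref_irrefl, IB.pref_irrefl, IH.pref_irrefl]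
    · have hadjz : IA.adj x z := ho z rfl
      have hadjzB : IB.adj x z := by rw [← hadjAB]; exact hadjz
      have hadjyB : IB.adj x y := by rw [← hadjAB]; exact he
      have hne : y ≠ z := fun h => hzy h.symm
      by_cases hp : IA.pref x z y ∨ IB.pref x z y
      · have h1 : voteO IH x (some y) (some z) = -1 := voteO_of_pref' IH (hup z hp)
        rcases hp with hA | hB
        · rw [h1, voteO_of_pref' IA hA]
          rcases IB.pref_total x y z hadjyB hadjzB hne with h | h
          · rw [voteO_of_pref IB h]; decide
          · rw [voteO_of_pref' IB h]; decide
        · rw [h1, voteO_of_pref' IB hB]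
          rcases IA.pref_total x y z he hadjz hne with h | h
          · rw [voteO_of_pref IA h]; decide
          · rw [voteO_of_pref' IA h]; decide
      · push_neg at hp
        have hHyz : IH.pref x y z := hdown z hadjz hzy (by tauto)
        have hA : IA.pref x y z := (IA.pref_total x y z he hadjz hne).resolve_right hp.1
        have hB : IB.pref x y z := (IB.pref_total x y z hadjyB hadjzB hne).resolve_right hp.2
        rw [voteO_of_pref IH hHyz, voteO_of_pref IA hA, voteO_of_pref IB hB]
        decide

lemma margin_min (IA IB IH : MatP α) (x y : α)
    (hsame : SameExcept IA IB x) (he : IA.adj x y) (hH : IsHybrid IA IB IH x y)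
    (M M' : α → Option α) (hMx : M x = some y)
    (hM' : ∀ z, M' x = some z → IA.adj x z) :
    margin IH M M' = min (margin IA M M') (margin IB M M') := by
  have hx : x ∈ IA.W ∪ IA.F := by
    rcases IA.adj_bipartite x y he with ⟨h, _⟩ | ⟨h, _⟩ <;> simp [h]
  unfold margin
  rw [hH.1, hH.2.1, ← hsame.1, ← hsame.2.1]
  rw [← Finset.add_sum_erase _ (fun u => voteO IH u (M u) (M' u)) hx,
      ← Finset.add_sum_erase _ (fun u => voteO IA u (M u) (M' u)) hx,
      ← Finset.add_sum_erase _ (fun u => voteO IB u (M u) (M' u)) hx]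
  have hsum1 : ∑ u ∈ (IA.W ∪ IA.F).erase x, voteO IH u (M u) (M' u)
      = ∑ u ∈ (IA.W ∪ IA.F).erase x, voteO IA u (M u) (M' u) :=
    Finset.sum_congr rfl fun u hu =>
      voteO_eq_of_pref_iff IH IA u (hH.2.2.2.1 u (Finset.ne_of_mem_erase hu)) _ _
  have hsum2 : ∑ u ∈ (IA.W ∪ IA.F).erase x, voteO IB u (M u) (M' u)
      = ∑ u ∈ (IA.W ∪ IA.F).erase x, voteO IA u (M u) (M' u) :=
    Finset.sum_congr rfl fun u hu =>
      (voteO_eq_of_pref_iff IA IB u (hsame.2.2.2 u (Finset.ne_of_mem_erase hu)) _ _).symm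
  rw [hsum1, hsum2]
  simp only [hMx]
  rw [vote_x_min IA IB IH x y hsame he hH (M' x) hM']
  omega

end Aux

/-- Corollary 3(1): there is a matching containing the edge `{x,y}` that is
popular for both `IA` and `IB` iff there is a matching containing `{x,y}`
that is popular for the hybrid instance. -/
theorem robust_popular_edge_iff_hybrid {α : Type*} [DecidableEq α]
    (IA IB IH : MatP α) (x y : α)
    (hsame : SameExcept IA IB x)
    (he : IA.adj x y)
    (hH : IsHybrid IA IB IH x y) :
    (∃ M, IsMatching IA M ∧ M x = some y ∧ Popular IA M ∧ Popular IB M) ↔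
      (∃ M, IsMatching IH M ∧ M x = some y ∧ Popular IH M) := by
  have hadjH : IH.adj = IA.adj := hH.2.2.1
  have hadjB : IA.adj = IB.adj := hsame.2.2.1
  have key : ∀ M M', IsMatching IA M' → M x = some y →
      margin IH M M' = min (margin IA M M') (margin IB M M') := fun M M' hM' hMx =>
    margin_min IA IB IH x y hsame he hH M M' hMx (fun z hz => hM'.1 x z hz)
  constructor
  · rintro ⟨M, hM, hMx, hpA, hpB⟩
    refine ⟨M, (isMatching_congr IH IA hadjH M).mpr hM, hMx, ?_⟩
    intro M' hM'H
    have hM'A : IsMatching IA M' := (isMatching_congr IH IA hadjH M').mp hM'H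
    rw [key M M' hM'A hMx]
    exact le_min (hpA M' hM'A) (hpB M' ((isMatching_congr IA IB hadjB M').mp hM'A))
  · rintro ⟨M, hMH, hMx, hpH⟩
    have hMA : IsMatching IA M := (isMatching_congr IH IA hadjH M).mp hMH
    refine ⟨M, hMA, hMx, ?_, ?_⟩
    · intro M' hM'A
      have h0 := hpH M' ((isMatching_congr IH IA hadjH M').mpr hM'A)
      rw [key M M' hM'A hMx] at h0
      exact le_trans h0 (min_le_left _ _)
    · intro M' hM'B
      have hM'A : IsMatching IA M' := (isMatching_congr IA IB hadjB M').mpr hM'B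
      have h0 := hpH M' ((isMatching_congr IH IA hadjH M').mpr hM'A)
      rw [key M M' hM'A hMx] at h0
      exact le_trans h0 (min_le_right _ _)
end

section
/- Let I_A and I_B be two MatP instances on the same bipartite graph G = (W ∪ F, E) that differ only in the preference order of a single agent x, let e = {x,y} ∈ E, and let I_H be a hybrid instance of (I_A, I_B) with respect to e. Then there exists a matching containing e that is dominant for both I_A and I_B if and only if there exists a matching containing e that is dominant for I_H. -/
open Classical

/-- Number of matched agents: twice the number of edges of the matching. -/
noncomputable def msize {α : Type*} [Fintype α] (M : α → Option α) : ℕ :=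
  (Finset.univ.filter fun x => (M x).isSome).card

/-- `M` is dominant for `I`: popular and strictly defeats every larger matching. -/
def Dominant {α : Type*} [Fintype α] [DecidableEq α]
    (I : MatP α) (M : α → Option α) : Prop :=
  Popular I M ∧ ∀ M', IsMatching I M' → msize M < msize M' → 0 < margin I M M'

/-- Corollary 3(2): there is a matching containing the edge `{x,y}` that is
dominant for both `IA` and `IB` iff there is a matching containing `{x,y}`
that is dominant for the hybrid instance. -/
theorem robust_dominant_edge_iff_hybrid {α : Type*} [Fintype α] [DecidableEq α]
    (IA IB IH : MatP α) (x y : α)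
    (hsame : SameExcept IA IB x)
    (he : IA.adj x y)
    (hH : IsHybrid IA IB IH x y) :
    (∃ M, IsMatching IA M ∧ M x = some y ∧ Dominant IA M ∧ Dominant IB M) ↔
      (∃ M, IsMatching IH M ∧ M x = some y ∧ Dominant IH M) := by
  obtain ⟨hWB, hFB, hadjB, hprefB⟩ := hsame
  obtain ⟨hWH, hFH, hadjH, hprefH, hAB, hnAB⟩ := hH
  -- asymmetry
  have asymm : ∀ (I : MatP α) (u v : α), I.pref x u v → ¬ I.pref x v u := by
    intro I u v h h'
    exact I.pref_irrefl x u (I.pref_trans x u v u h h')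
  have heB : IB.adj x y := by rw [← hadjB]; exact he
  have heH : IH.adj x y := by rw [hadjH]; exact he
  -- key vote lemma at x
  have vote_key : ∀ o' : Option α, (∀ z, o' = some z → IA.adj x z) →
      (voteO IH x (some y) o' ≤ voteO IA x (some y) o' ∧
       voteO IH x (some y) o' ≤ voteO IB x (some y) o') ∧
      (voteO IH x (some y) o' = voteO IA x (some y) o' ∨
       voteO IH x (some y) o' = voteO IB x (some y) o') := by
    intro o' ho'
    cases o' with
    | none => simp [voteO, Better]
    | some z =>
      have hz : IA.adj x z := ho' z rfl
      have hzB : IB.adj x z := by rw [← hadjB]; exact hz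
      have hzH : IH.adj x z := by rw [hadjH]; exact hz
      by_cases hzy : z = y
      · subst hzy
        simp [voteO, Better, IA.pref_irrefl, IB.pref_irrefl, IH.pref_irrefl]
      rcases IH.pref_total x y z heH hzH (Ne.symm hzy) with h | h
      · have hnA : ¬ IA.pref x z y := fun hA => asymm IH y z h (hAB z (Or.inl hA))
        have hnB : ¬ IB.pref x z y := fun hB => asymm IH y z h (hAB z (Or.inr hB))
        have hA : IA.pref x y z :=
          (IA.pref_total x y z he hz (Ne.symm hzy)).resolve_right hnA
        have hB : IB.pref x y z :=
          (IB.pref_total x y z heB hzB (Ne.symm hzy)).resolve_right hnB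
        simp [voteO, Better, h, hA, hB]
      · have hor : IA.pref x z y ∨ IB.pref x z y := by
          by_contra hno
          exact asymm IH z y h (hnAB z hz hzy hno)
        have hHn : ¬ IH.pref x y z := asymm IH z y h
        have hvH : voteO IH x (some y) (some z) = -1 := by
          simp [voteO, Better, h, hHn]
        have hge : ∀ I : MatP α, (-1 : ℤ) ≤ voteO I x (some y) (some z) := by
          intro I; unfold voteO; split_ifs <;> omega
        refine ⟨⟨by rw [hvH]; exact hge IA, by rw [hvH]; exact hge IB⟩, ?_⟩
        rcases hor with hA | hB
        · left; rw [hvH]; simp [voteO, Better, hA, asymm IA z y hA]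
        · right; rw [hvH]; simp [voteO, Better, hB, asymm IB z y hB]
  -- votes of other agents coincide
  have voteH_eq : ∀ z, z ≠ x → ∀ o o', voteO IH z o o' = voteO IA z o o' := by
    intro z hzx o o'
    have hb : ∀ a b, Better IH z a b ↔ Better IA z a b := by
      intro a b; cases a <;> cases b <;> simp [Better, hprefH z hzx]
    unfold voteO; simp only [hb]
  have voteB_eq : ∀ z, z ≠ x → ∀ o o', voteO IB z o o' = voteO IA z o o' := by
    intro z hzx o o'
    have hb : ∀ a b, Better IB z a b ↔ Better IA z a b := by
      intro a b; cases a <;> cases b <;> simp [Better, hprefB z hzx]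
    unfold voteO; simp only [hb]
  set s := IA.W ∪ IA.F with hs
  have hmB : ∀ M M', margin IB M M' = ∑ z ∈ s, voteO IB z (M z) (M' z) := by
    intro M M'; unfold margin; rw [← hWB, ← hFB]
  have hmH : ∀ M M', margin IH M M' = ∑ z ∈ s, voteO IH z (M z) (M' z) := by
    intro M M'; unfold margin; rw [hWH, hFH]
  -- key margin lemma
  have key : ∀ M M', M x = some y → IsMatching IA M' →
      (margin IH M M' ≤ margin IA M M' ∧ margin IH M M' ≤ margin IB M M') ∧
      (margin IH M M' = margin IA M M' ∨ margin IH M M' = margin IB M M') := by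
    intro M M' hMx hM'
    have ho' : ∀ z, M' x = some z → IA.adj x z := fun z hz => hM'.1 x z hz
    have hx := vote_key (M' x) ho'
    constructor
    · constructor
      · rw [hmH]
        apply Finset.sum_le_sum
        intro z hz
        by_cases hzx : z = x
        · subst hzx; rw [hMx]; exact hx.1.1
        · rw [voteH_eq z hzx]
      · rw [hmH, hmB]
        apply Finset.sum_le_sum
        intro z hz
        by_cases hzx : z = x
        · subst hzx; rw [hMx]; exact hx.1.2
        · rw [voteH_eq z hzx, voteB_eq z hzx]
    · rcases hx.2 with h | h
      · left; rw [hmH]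
        apply Finset.sum_congr rfl
        intro z _
        by_cases hzx : z = x
        · subst hzx; rw [hMx]; exact h
        · exact voteH_eq z hzx _ _
      · right; rw [hmH, hmB]
        apply Finset.sum_congr rfl
        intro z _
        by_cases hzx : z = x
        · subst hzx; rw [hMx]; exact h
        · rw [voteH_eq z hzx, voteB_eq z hzx]
  -- matchings coincide across instances
  have matchAH : ∀ M, IsMatching IA M ↔ IsMatching IH M := by
    intro M; unfold IsMatching; rw [hadjH]
  have matchAB : ∀ M, IsMatching IA M ↔ IsMatching IB M := by
    intro M; unfold IsMatching; rw [hadjB]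
  constructor
  · rintro ⟨M, hMA, hMx, ⟨hpopA, hdomA⟩, ⟨hpopB, hdomB⟩⟩
    refine ⟨M, (matchAH M).1 hMA, hMx, ?_, ?_⟩
    · intro M' hM'H
      have hM'A := (matchAH M').2 hM'H
      rcases (key M M' hMx hM'A).2 with h | h
      · rw [h]; exact hpopA M' hM'A
      · rw [h]; exact hpopB M' ((matchAB M').1 hM'A)
    · intro M' hM'H hsz
      have hM'A := (matchAH M').2 hM'H
      rcases (key M M' hMx hM'A).2 with h | h
      · rw [h]; exact hdomA M' hM'A hsz
      · rw [h]; exact hdomB M' ((matchAB M').1 hM'A) hsz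
  · rintro ⟨M, hMH, hMx, hpopH, hdomH⟩
    have hMA := (matchAH M).2 hMH
    refine ⟨M, hMA, hMx, ⟨?_, ?_⟩, ⟨?_, ?_⟩⟩
    · intro M' hM'A
      exact le_trans (hpopH M' ((matchAH M').1 hM'A)) (key M M' hMx hM'A).1.1
    · intro M' hM'A hsz
      exact lt_of_lt_of_le (hdomH M' ((matchAH M').1 hM'A) hsz) (key M M' hMx hM'A).1.1
    · intro M' hM'B
      have hM'A := (matchAB M').2 hM'B
      exact le_trans (hpopH M' ((matchAH M').1 hM'A)) (key M M' hMx hM'A).1.2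
    · intro M' hM'B hsz
      have hM'A := (matchAB M').2 hM'B
      exact lt_of_lt_of_le (hdomH M' ((matchAH M').1 hM'A) hsz) (key M M' hMx hM'A).1.2
end

section
/- In any MatP instance, all dominant matchings cover the same set of agents; in particular, if an agent is unmatched in some dominant matching, then it is unmatched in every dominant matching. -/
open Classical

/-!
Suppose `x` is matched in a dominant matching `M` but not in a dominant matching `M'`, and let
`S` be the vertex set of the alternating path of `M ⊕ M'` that starts at `x`. Both hybrids
obtained by swapping `M` and `M'` on `S` are matchings, so popularity of `M` and of `M'` forces
the votes of `S` between `M` and `M'` to sum to `0`. Every agent of `S` votes `±1`, hence `|S|` is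
even; but then the path starts and ends with `M`-edges, so swapping `M'` for `M` on `S` yields a
matching larger than `M'` that does not lose to it, contradicting dominance of `M'`.

Because the graph is bipartite, the alternating path is the orbit of `x` under the single partial
map that follows `M` on the side of `x` and `M'` on the other side; this map is injective and
misses `x`, so its orbit never repeats and stops after finitely many steps.
-/

section

variable {α : Type*}

section PartialOrbit

def partialOrbit (f : α → Option α) (x : α) : ℕ → Option α
  | 0 => some x
  | n + 1 => (partialOrbit f x n).bind f

variable {f : α → Option α} {x : α}

theorem partialOrbit_injective (hf : ∀ a a' b, b ∈ f a → b ∈ f a' → a = a')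
    (hx : ∀ a, x ∉ f a) :
    ∀ {m n : ℕ} {v : α}, partialOrbit f x m = some v → partialOrbit f x n = some v → m = n
  | 0, 0, _, _, _ => rfl
  | 0, _ + 1, _, hm, hn => by
    obtain ⟨a, -, ha⟩ := Option.bind_eq_some_iff.1 hn
    cases hm
    exact absurd ha (hx a)
  | _ + 1, 0, _, hm, hn => by
    obtain ⟨a, -, ha⟩ := Option.bind_eq_some_iff.1 hm
    cases hn
    exact absurd ha (hx a)
  | _ + 1, _ + 1, v, hm, hn => by
    obtain ⟨a, ha, hav⟩ := Option.bind_eq_some_iff.1 hm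
    obtain ⟨b, hb, hbv⟩ := Option.bind_eq_some_iff.1 hn
    rw [partialOrbit_injective hf hx ha (hf a b v hav hbv ▸ hb)]

theorem exists_partialOrbit_eq_none [Finite α] (hf : ∀ a a' b, b ∈ f a → b ∈ f a' → a = a')
    (hx : ∀ a, x ∉ f a) : ∃ n, partialOrbit f x n = none := by
  by_contra! h
  have hsome (n : ℕ) : (partialOrbit f x n).isSome := Option.isSome_iff_ne_none.2 (h n)
  obtain ⟨m, n, hmn, heq⟩ :=
    Finite.exists_ne_map_eq_of_infinite fun n => (partialOrbit f x n).get (hsome n)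
  refine hmn (partialOrbit_injective hf hx (Option.eq_some_of_isSome (hsome m)) ?_)
  rw [heq]
  exact Option.eq_some_of_isSome (hsome n)

structure IsMaximalPath (f : α → Option α) (x : α) (N : ℕ) (v : ℕ → α) : Prop where
  pos : 0 < N
  start : v 0 = x
  injOn : Set.InjOn v (Set.Iio N)
  step : ∀ i < N, f (v i) = if i + 1 < N then some (v (i + 1)) else none

theorem exists_isMaximalPath [Finite α] (hf : ∀ a a' b, b ∈ f a → b ∈ f a' → a = a')
    (hx : ∀ a, x ∉ f a) : ∃ N v, IsMaximalPath f x N v := by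
  have : Nonempty α := ⟨x⟩
  have hend := exists_partialOrbit_eq_none hf hx
  obtain ⟨N, hN, hmin⟩ : ∃ N, partialOrbit f x N = none ∧ ∀ i < N, partialOrbit f x i ≠ none :=
    ⟨Nat.find hend, Nat.find_spec hend, fun i hi => Nat.find_min hend hi⟩
  choose! v hv using fun i hi => Option.ne_none_iff_exists'.1 (hmin i hi)
  have hpos : 0 < N := Nat.pos_of_ne_zero fun h => by simp [partialOrbit, h] at hN
  refine ⟨N, v, hpos, ?_, fun i hi j hj hij => partialOrbit_injective hf hx (hv i hi) ?_, ?_⟩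
  · simpa [partialOrbit] using (hv 0 hpos).symm
  · rw [hij]; exact hv j hj
  · intro i hi
    have hsucc : partialOrbit f x (i + 1) = f (v i) := by simp [partialOrbit, hv i hi]
    split_ifs with h
    · rw [← hsucc, hv _ h]
    · rw [← hsucc, show i + 1 = N by omega]
      exact hN

theorem IsMaximalPath.mem_image_of_mem {N : ℕ} {v : ℕ → α} (hp : IsMaximalPath f x N v)
    {i : ℕ} (hi : i < N) {u : α} (hu : u ∈ f (v i)) : u ∈ (Finset.range N).image v := by
  rw [hp.step i hi] at hu
  split_ifs at hu with h
  · cases hu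
    exact Finset.mem_image_of_mem v (Finset.mem_range.2 h)
  · cases hu

theorem IsMaximalPath.pred_mem_image {N : ℕ} {v : ℕ → α} (hp : IsMaximalPath f x N v)
    (hf : ∀ a a' b, b ∈ f a → b ∈ f a' → a = a') (hx : ∀ a, x ∉ f a)
    {i : ℕ} (hi : i < N) {u : α} (hu : v i ∈ f u) : u ∈ (Finset.range N).image v := by
  cases i with
  | zero => exact absurd (hp.start ▸ hu) (hx u)
  | succ j =>
    have hj : v (j + 1) ∈ f (v j) := by rw [hp.step j (by omega), if_pos hi]; rfl
    rw [hf _ _ _ hu hj]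
    exact Finset.mem_image_of_mem v (Finset.mem_range.2 (by omega))

end PartialOrbit

namespace MatP

theorem mem_W_iff_notMem_W_of_adj (I : MatP α) {a b : α} (h : I.adj a b) :
    a ∈ I.W ↔ b ∉ I.W := by
  have hWF := Finset.disjoint_left.1 I.disjWF
  rcases I.adj_bipartite a b h with ⟨ha, hb⟩ | ⟨ha, hb⟩
  · exact iff_of_true ha fun hbW => hWF hbW hb
  · exact iff_of_false (fun haW => hWF haW ha) (not_not.2 hb)

theorem mem_W_union_F_of_adj [DecidableEq α] (I : MatP α) {a b : α} (h : I.adj a b) :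
    a ∈ I.W ∪ I.F := by
  rcases I.adj_bipartite a b h with ⟨ha, -⟩ | ⟨ha, -⟩
  · exact Finset.mem_union_left _ ha
  · exact Finset.mem_union_right _ ha

end MatP

section Votes

variable {I : MatP α} {v : α} {o o' : Option α}

theorem Better.asymm (h : Better I v o o') : ¬ Better I v o' o := by
  intro h'
  cases o <;> cases o' <;> simp only [Better] at h h'
  exact I.pref_irrefl _ _ (I.pref_trans _ _ _ _ h h')

theorem voteO_self (I : MatP α) (v : α) (o : Option α) : voteO I v o o = 0 := by
  have : ¬ Better I v o o := by
    cases o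
    · exact not_false
    · exact I.pref_irrefl _ _
  simp [voteO, this]

theorem voteO_swap (I : MatP α) (v : α) (o o' : Option α) :
    voteO I v o' o = -voteO I v o o' := by
  unfold voteO
  by_cases h : Better I v o o'
  · simp [h, h.asymm]
  · by_cases h' : Better I v o' o <;> simp [h, h']

theorem voteO_eq_one_or_eq_neg_one (hne : o ≠ o')
    (hadj : ∀ w, o = some w ∨ o' = some w → I.adj v w) :
    voteO I v o o' = 1 ∨ voteO I v o o' = -1 := by
  have hbetter : Better I v o o' ∨ Better I v o' o := by
    match o, o' with
    | none, none => exact absurd rfl hne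
    | some _, none => exact Or.inl trivial
    | none, some _ => exact Or.inr trivial
    | some y, some z =>
      exact I.pref_total v y z (hadj y (.inl rfl)) (hadj z (.inr rfl)) fun h => hne (h ▸ rfl)
  rcases hbetter with h | h
  · simp [voteO, h]
  · simp [voteO, h, h.asymm]

theorem sum_voteO_swap [DecidableEq α] (I : MatP α) (S : Finset α) (M M' : α → Option α) :
    ∑ v ∈ S, voteO I v (M' v) (M v) = -∑ v ∈ S, voteO I v (M v) (M' v) := by
  simp only [voteO_swap I _ (M _), Finset.sum_neg_distrib]

end Votes

theorem Finset.even_card_of_sum_eq_zero {ι : Type*} {s : Finset ι} {f : ι → ℤ}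
    (hf : ∀ i ∈ s, f i = 1 ∨ f i = -1) (h : ∑ i ∈ s, f i = 0) : Even s.card := by
  rw [← ZMod.natCast_eq_zero_iff_even, Finset.card_eq_sum_ones, Nat.cast_sum, ← Int.cast_zero,
    ← h, Int.cast_sum]
  refine Finset.sum_congr rfl fun i hi => ?_
  rcases hf i hi with h | h <;> simp [h]

def IsClosedUnder (S : Finset α) (M : α → Option α) : Prop :=
  ∀ v ∈ S, ∀ w ∈ M v, w ∈ S

section Hybrid

variable {I : MatP α} {M M' : α → Option α} {S : Finset α}

theorem IsMatching.piecewise [∀ v, Decidable (v ∈ S)] (hM : IsMatching I M)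
    (hM' : IsMatching I M') (hSM : IsClosedUnder S M) (hSM' : IsClosedUnder S M') :
    IsMatching I (S.piecewise M M') := by
  constructor
  · intro v w h
    by_cases hv : v ∈ S
    · rw [S.piecewise_eq_of_mem _ _ hv] at h
      exact hM.1 _ _ h
    · rw [S.piecewise_eq_of_notMem _ _ hv] at h
      exact hM'.1 _ _ h
  · intro v w h
    by_cases hv : v ∈ S
    · rw [S.piecewise_eq_of_mem _ _ hv] at h
      rw [S.piecewise_eq_of_mem _ _ (hSM v hv w h)]
      exact hM.2 _ _ h
    · rw [S.piecewise_eq_of_notMem _ _ hv] at h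
      have hw : w ∉ S := fun hw => hv (hSM' w hw v (hM'.2 _ _ h))
      rw [S.piecewise_eq_of_notMem _ _ hw]
      exact hM'.2 _ _ h

theorem margin_piecewise [DecidableEq α] (hS : S ⊆ I.W ∪ I.F) :
    margin I M (S.piecewise M' M) = ∑ v ∈ S, voteO I v (M v) (M' v) := by
  rw [margin, ← Finset.sum_subset hS fun v _ hv => by
    rw [S.piecewise_eq_of_notMem _ _ hv, voteO_self]]
  exact Finset.sum_congr rfl fun v hv => by rw [S.piecewise_eq_of_mem _ _ hv]

theorem sum_voteO_eq_zero_of_popular [DecidableEq α] (hM : IsMatching I M)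
    (hM' : IsMatching I M') (hP : Popular I M) (hP' : Popular I M') (hSM : IsClosedUnder S M)
    (hSM' : IsClosedUnder S M') (hS : S ⊆ I.W ∪ I.F) :
    ∑ v ∈ S, voteO I v (M v) (M' v) = 0 := by
  have h := hP _ (hM'.piecewise hM hSM' hSM)
  have h' := hP' _ (hM.piecewise hM' hSM hSM')
  rw [margin_piecewise hS] at h h'
  rw [sum_voteO_swap] at h'
  omega

theorem msize_lt_msize_piecewise [Fintype α] [∀ v, Decidable (v ∈ S)]
    (hS : ∀ v ∈ S, (M v).isSome) {x : α} (hxS : x ∈ S) (hx' : M' x = none) :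
    msize M' < msize (S.piecewise M M') := by
  refine Finset.card_lt_card ((Finset.ssubset_iff_of_subset fun v hv => ?_).2 ⟨x, ?_, ?_⟩)
  · simp only [Finset.mem_filter, Finset.mem_univ, true_and] at hv ⊢
    by_cases hvS : v ∈ S
    · rw [S.piecewise_eq_of_mem _ _ hvS]
      exact hS v hvS
    · rwa [S.piecewise_eq_of_notMem _ _ hvS]
  · simp [S.piecewise_eq_of_mem _ _ hxS, hS x hxS]
  · simp [hx']

end Hybrid

section AlternatingPath

variable {I : MatP α} {M M' : α → Option α} {x : α}

noncomputable def alternateStep (I : MatP α) (M M' : α → Option α) (x v : α) : Option α :=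
  if (v ∈ I.W ↔ x ∈ I.W) then M v else M' v

theorem alternateStep_or (I : MatP α) (M M' : α → Option α) (x v : α) :
    (M v = alternateStep I M M' x v ∧ M' v = alternateStep I M' M x v) ∨
      (M v = alternateStep I M' M x v ∧ M' v = alternateStep I M M' x v) := by
  unfold alternateStep
  split_ifs <;> simp

theorem adj_of_mem_alternateStep (hM : IsMatching I M) (hM' : IsMatching I M') {v w : α}
    (h : w ∈ alternateStep I M M' x v) : I.adj v w := by
  unfold alternateStep at h
  split_ifs at h
  exacts [hM.1 _ _ h, hM'.1 _ _ h]

theorem mem_alternateStep_swap (hM : IsMatching I M) (hM' : IsMatching I M') {a b : α}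
    (h : b ∈ alternateStep I M M' x a) : a ∈ alternateStep I M' M x b := by
  have hside := I.mem_W_iff_notMem_W_of_adj (adj_of_mem_alternateStep hM hM' h)
  unfold alternateStep at h ⊢
  by_cases ha : a ∈ I.W ↔ x ∈ I.W
  · rw [if_pos ha] at h
    rw [if_neg (by tauto)]
    exact hM.2 _ _ h
  · rw [if_neg ha] at h
    rw [if_pos (by tauto)]
    exact hM'.2 _ _ h

theorem alternateStep_injective (hM : IsMatching I M) (hM' : IsMatching I M') :
    ∀ a a' b, b ∈ alternateStep I M M' x a → b ∈ alternateStep I M M' x a' → a = a' :=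
  fun _ _ _ ha ha' => Option.some_injective _ <|
    (mem_alternateStep_swap hM hM' ha).symm.trans (mem_alternateStep_swap hM hM' ha')

theorem alternateStep_self (I : MatP α) (M M' : α → Option α) (x : α) :
    alternateStep I M M' x x = M x :=
  if_pos Iff.rfl

theorem notMem_alternateStep (hM : IsMatching I M) (hM' : IsMatching I M') (hx' : M' x = none)
    (a : α) : x ∉ alternateStep I M M' x a := fun ha => by
  have := mem_alternateStep_swap hM hM' ha
  rw [alternateStep_self, hx'] at this
  exact Option.not_mem_none a this

section MaximalPath

variable {N : ℕ} {v : ℕ → α}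

theorem IsMaximalPath.alternateStep_succ (hM : IsMatching I M) (hM' : IsMatching I M')
    (hp : IsMaximalPath (alternateStep I M M' x) x N v) {j : ℕ} (hj : j + 1 < N) :
    alternateStep I M' M x (v (j + 1)) = some (v j) :=
  mem_alternateStep_swap hM hM' (show v (j + 1) ∈ alternateStep I M M' x (v j) by
    rw [hp.step j (by omega), if_pos hj]; rfl)

theorem IsMaximalPath.mem_W_iff_even (hM : IsMatching I M) (hM' : IsMatching I M')
    (hp : IsMaximalPath (alternateStep I M M' x) x N v) :
    ∀ i < N, ((v i ∈ I.W ↔ x ∈ I.W) ↔ Even i)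
  | 0, _ => by simp [hp.start]
  | i + 1, hi => by
    have hadj : I.adj (v i) (v (i + 1)) :=
      adj_of_mem_alternateStep hM hM' (by rw [hp.step i (by omega), if_pos hi]; rfl)
    have := hp.mem_W_iff_even hM hM' i (by omega)
    have := I.mem_W_iff_notMem_W_of_adj hadj
    rw [Nat.even_add_one]
    tauto

theorem IsMaximalPath.isClosedUnder (hM : IsMatching I M) (hM' : IsMatching I M')
    (hx' : M' x = none) (hp : IsMaximalPath (alternateStep I M M' x) x N v)
    {M₀ : α → Option α}
    (hM₀ : ∀ w, M₀ w = alternateStep I M M' x w ∨ M₀ w = alternateStep I M' M x w) :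
    IsClosedUnder ((Finset.range N).image v) M₀ := by
  simp only [IsClosedUnder, Finset.forall_mem_image, Finset.mem_range]
  intro i hi u hu
  rcases hM₀ (v i) with h | h <;> rw [h] at hu
  · exact hp.mem_image_of_mem hi hu
  · exact hp.pred_mem_image (alternateStep_injective hM hM') (notMem_alternateStep hM hM' hx')
      hi (mem_alternateStep_swap hM' hM hu)

theorem IsMaximalPath.alternateStep_ne (hM : IsMatching I M) (hM' : IsMatching I M')
    (hx : (M x).isSome) (hx' : M' x = none) (hp : IsMaximalPath (alternateStep I M M' x) x N v)
    {i : ℕ} (hi : i < N) : alternateStep I M M' x (v i) ≠ alternateStep I M' M x (v i) := by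
  cases i with
  | zero =>
    rw [hp.start, alternateStep_self, alternateStep_self, hx']
    exact Option.isSome_iff_ne_none.1 hx
  | succ j =>
    rw [hp.step _ hi, hp.alternateStep_succ hM hM' hi]
    split_ifs with h
    · intro he
      have := hp.injOn h (show j < N by omega) (Option.some_injective _ he)
      omega
    · nofun

theorem IsMaximalPath.isSome_of_even (hM : IsMatching I M) (hM' : IsMatching I M')
    (hp : IsMaximalPath (alternateStep I M M' x) x N v) (hN : Even N) {i : ℕ} (hi : i < N) :
    (M (v i)).isSome := by
  by_cases hside : v i ∈ I.W ↔ x ∈ I.W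
  · have hi' : i + 1 < N := by
      have := (hp.mem_W_iff_even hM hM' i hi).1 hside
      rw [Nat.even_iff] at this hN
      omega
    rw [show M (v i) = alternateStep I M M' x (v i) from (if_pos hside).symm, hp.step i hi,
      if_pos hi']
    rfl
  · obtain ⟨j, rfl⟩ : ∃ j, i = j + 1 :=
      Nat.exists_eq_succ_of_ne_zero fun h => hside (by rw [h, hp.start])
    rw [show M (v (j + 1)) = alternateStep I M' M x (v (j + 1)) from (if_neg hside).symm,
      hp.alternateStep_succ hM hM' hi]
    rfl

end MaximalPath

theorem exists_alternatingPath [Finite α] (hM : IsMatching I M) (hM' : IsMatching I M')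
    (hx : (M x).isSome) (hx' : M' x = none) :
    ∃ S : Finset α, x ∈ S ∧ IsClosedUnder S M ∧ IsClosedUnder S M' ∧ (∀ v ∈ S, M v ≠ M' v) ∧
      (Even S.card → ∀ v ∈ S, (M v).isSome) := by
  obtain ⟨N, v, hp⟩ :=
    exists_isMaximalPath (alternateStep_injective hM hM') (notMem_alternateStep hM hM' hx')
  have hcard : ((Finset.range N).image v).card = N := by
    rw [Finset.card_image_of_injOn (by rw [Finset.coe_range]; exact hp.injOn), Finset.card_range]
  refine ⟨(Finset.range N).image v, ?_, hp.isClosedUnder hM hM' hx' fun w => ?_,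
    hp.isClosedUnder hM hM' hx' fun w => ?_, ?_, fun heven => ?_⟩
  · exact hp.start ▸ Finset.mem_image_of_mem v (Finset.mem_range.2 hp.pos)
  · rcases alternateStep_or I M M' x w with h | h <;> simp [h]
  · rcases alternateStep_or I M M' x w with h | h <;> simp [h]
  · simp only [Finset.forall_mem_image, Finset.mem_range]
    intro i hi
    rcases alternateStep_or I M M' x (v i) with h | h <;> rw [h.1, h.2]
    exacts [hp.alternateStep_ne hM hM' hx hx' hi, (hp.alternateStep_ne hM hM' hx hx' hi).symm]
  · simp only [Finset.forall_mem_image, Finset.mem_range]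
    exact fun i hi => hp.isSome_of_even hM hM' (hcard ▸ heven) hi

end AlternatingPath

theorem isSome_of_popular_of_dominant [Fintype α] [DecidableEq α] {I : MatP α}
    {M M' : α → Option α} (hM : IsMatching I M) (hM' : IsMatching I M') (hP : Popular I M)
    (hD' : Dominant I M') {x : α} (hx : (M x).isSome) : (M' x).isSome := by
  by_contra hx'
  rw [Option.not_isSome_iff_eq_none] at hx'
  obtain ⟨S, hxS, hSM, hSM', hne, hcover⟩ := exists_alternatingPath hM hM' hx hx'
  have hadj : ∀ v w, M v = some w ∨ M' v = some w → I.adj v w :=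
    fun v w hw => hw.elim (hM.1 v w) (hM'.1 v w)
  have hS : S ⊆ I.W ∪ I.F := fun v hv => by
    cases hMv : M v with
    | some w => exact I.mem_W_union_F_of_adj (hM.1 v w hMv)
    | none =>
      obtain ⟨w, hw⟩ := Option.ne_none_iff_exists'.1 (hMv ▸ (hne v hv).symm)
      exact I.mem_W_union_F_of_adj (hM'.1 v w hw)
  have hzero := sum_voteO_eq_zero_of_popular hM hM' hP hD'.1 hSM hSM' hS
  have heven := Finset.even_card_of_sum_eq_zero
    (fun v hv => voteO_eq_one_or_eq_neg_one (hne v hv) (hadj v)) hzero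
  have hpos := hD'.2 _ (hM.piecewise hM' hSM hSM') (msize_lt_msize_piecewise (hcover heven) hxS hx')
  rw [margin_piecewise hS, sum_voteO_swap, hzero, neg_zero] at hpos
  exact lt_irrefl 0 hpos

end

/-- All dominant matchings of a MatP instance cover the same set of agents;
in particular, an agent unmatched in some dominant matching is unmatched in
every dominant matching. -/
theorem dominant_same_cover {α : Type*} [Fintype α] [DecidableEq α]
    (I : MatP α) (M M' : α → Option α)
    (hM : IsMatching I M) (hM' : IsMatching I M')
    (hD : Dominant I M) (hD' : Dominant I M') :
    (∀ x, (M x).isSome ↔ (M' x).isSome) ∧ (∀ x, M x = none → M' x = none) := by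
  have hcover (x : α) : (M x).isSome ↔ (M' x).isSome :=
    ⟨isSome_of_popular_of_dominant hM hM' hD.1 hD', isSome_of_popular_of_dominant hM' hM hD'.1 hD⟩
  refine ⟨hcover, fun x hx => ?_⟩
  simpa [hx] using hcover x
end

section
/- Let I_1, …, I_k be MatP instances on the same vertex sets W ∪ F with edge sets E_1, …, E_k, where I_1 is complete (E_1 = W × F) and the instances differ only by altered availability, i.e., for every agent x there is a strict linear order ≻_x on the union of its neighborhoods that restricts to ≻_x^{I_i} on N_x^{I_i} for each i. Then a matching M is popular for every I_i (1 ≤ i ≤ k) if and only if M ⊆ ∩_{i=1}^k E_i and M is popular for I_1. -/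
open Classical

/-- For instances `I 0, …, I k` on the same vertex sets, where `I 0` is complete
and the instances differ only by altered availability (their preferences are
restrictions of one common strict order `p`), a matching `M` is popular for all
instances iff `M` is contained in the intersection of all edge sets and `M` is
popular for the complete instance `I 0`. -/
theorem robust_iff_complete_altered_availability {α : Type*} [DecidableEq α] (k : ℕ)
    (I : Fin (k+1) → MatP α)
    (hW : ∀ i, (I i).W = (I 0).W) (hF : ∀ i, (I i).F = (I 0).F)
    (hcomplete : ∀ w ∈ (I 0).W, ∀ f ∈ (I 0).F, (I 0).adj w f)
    (p : α → α → α → Prop)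
    (hp_adj : ∀ x u v, p x u v → (∃ i, (I i).adj x u) ∧ (∃ j, (I j).adj x v))
    (hp_trans : ∀ x u v w, p x u v → p x v w → p x u w)
    (hp_irrefl : ∀ x u, ¬ p x u u)
    (hp_total : ∀ x u v, (∃ i, (I i).adj x u) → (∃ j, (I j).adj x v) → u ≠ v →
      p x u v ∨ p x v u)
    (hrestrict : ∀ i x u v, (I i).adj x u → (I i).adj x v →
      ((I i).pref x u v ↔ p x u v))
    (M : α → Option α) :
    (∀ i, IsMatching (I i) M ∧ Popular (I i) M) ↔
      ((∀ i, ∀ x y, M x = some y → (I i).adj x y) ∧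
        IsMatching (I 0) M ∧ Popular (I 0) M) := by
  constructor
  · intro h
    exact ⟨fun i => (h i).1.1, (h 0).1, (h 0).2⟩
  · rintro ⟨hadj, hM0, hpop⟩
    have adj0 : ∀ i x y, (I i).adj x y → (I 0).adj x y := by
      intro i x y h
      rcases (I i).adj_bipartite x y h with ⟨hx, hy⟩ | ⟨hx, hy⟩
      · rw [hW i] at hx; rw [hF i] at hy
        exact hcomplete x hx y hy
      · rw [hF i] at hx; rw [hW i] at hy
        exact (I 0).adj_symm _ _ (hcomplete y hy x hx)
    intro i
    refine ⟨⟨hadj i, hM0.2⟩, ?_⟩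
    intro M' hM'
    have hM'0 : IsMatching (I 0) M' := ⟨fun x y h => adj0 i x y (hM'.1 x y h), hM'.2⟩
    have hkey : margin (I i) M M' = margin (I 0) M M' := by
      unfold margin
      apply Finset.sum_congr
      · rw [hW i, hF i]
      intro x _
      have hbet : ∀ o o', (∀ y, o = some y → (I i).adj x y ∧ (I 0).adj x y) →
          (∀ y, o' = some y → (I i).adj x y ∧ (I 0).adj x y) →
          (Better (I i) x o o' ↔ Better (I 0) x o o') := by
        intro o o' h1 h2
        match o, o' with
        | none, _ => simp [Better]
        | some y, none => simp [Better]
        | some y, some z =>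
          have hy := h1 y rfl
          have hz := h2 z rfl
          show (I i).pref x y z ↔ (I 0).pref x y z
          rw [hrestrict i x y z hy.1 hz.1, hrestrict 0 x y z hy.2 hz.2]
      have hMx : ∀ y, M x = some y → (I i).adj x y ∧ (I 0).adj x y :=
        fun y h => ⟨hadj i x y h, hM0.1 x y h⟩
      have hM'x : ∀ y, M' x = some y → (I i).adj x y ∧ (I 0).adj x y :=
        fun y h => ⟨hM'.1 x y h, adj0 i x y (hM'.1 x y h)⟩
      have e1 := hbet (M x) (M' x) hMx hM'x
      have e2 := hbet (M' x) (M x) hM'x hMx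
      simp only [voteO, e1, e2]
    rw [hkey]
    exact hpop M' hM'0
end
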